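/- Let K be a field, R = K⟨x,y⟩/(x², y³, (x+y)⁴), and J the two-sided ideal of R generated by x and y. If f = θ₁·xy + θ₂·yx + θ₃·y² + g with θ₁, θ₂, θ₃ ∈ K, g ∈ J³, and (x + y + f)⁴ = 0 in R, then θ₁ + θ₂ = 2θ₃. -/

import Mathlib

noncomputable section

/-- The relations `x² = 0`, `y³ = 0`, `(x+y)⁴ = 0` on `K⟨x,y⟩`, with `x = ι 0`, `y = ι 1`. -/
inductive Rel7 (K : Type*) [CommRing K] :
    FreeAlgebra K (Fin 2) → FreeAlgebra K (Fin 2) → Prop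
  | xx : Rel7 K (FreeAlgebra.ι K 0 * FreeAlgebra.ι K 0) 0
  | yyy : Rel7 K (FreeAlgebra.ι K 1 * (FreeAlgebra.ι K 1 * FreeAlgebra.ι K 1)) 0
  | pow : Rel7 K ((FreeAlgebra.ι K 0 + FreeAlgebra.ι K 1) ^ 4) 0

/-- The algebra `R(E₇) = K⟨x,y⟩/(x², y³, (x+y)⁴)`. -/
abbrev RE7 (K : Type*) [CommRing K] := RingQuot (Rel7 K)

/-- The image of `x` in `R(E₇)`. -/
def e7x (K : Type*) [CommRing K] : RE7 K :=
  RingQuot.mkRingHom (Rel7 K) (FreeAlgebra.ι K 0)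

/-- The image of `y` in `R(E₇)`. -/
def e7y (K : Type*) [CommRing K] : RE7 K :=
  RingQuot.mkRingHom (Rel7 K) (FreeAlgebra.ι K 1)

/-- The two-sided ideal of `R(E₇)` generated by `x` and `y`, viewed as a `K`-submodule
(so that its powers are available via submodule multiplication). -/
def JE7 (K : Type*) [CommRing K] : Submodule K (RE7 K) :=
  ⊤ * Submodule.span K {e7x K, e7y K} * ⊤

/-! The words `1, y, xy, y², xy², yxy, xyxy, yxyxy` form a basis of an 8-dimensional cyclic
left `R(E₇)`-module, graded by word length, on which `x` and `y` raise the degree by one; so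
`J⁶` acts by zero and `J³` raises degrees by three. With `s = x + y` and
`m = θ₁xy + θ₂yx + θ₃y²`, expanding `(s + m + g)⁴` and using `s⁴ = 0` leaves, modulo operators
of degree `≥ 6`, only `s³m + s²ms + sms² + ms³`; the coefficient of `yxyxy` in its action on
`1` is `θ₁ + θ₂ - 2θ₃`. -/
namespace Matrix

variable {n R : Type*} [CommRing R] (d : n → ℕ)

def degreeRaising (k : ℕ) : Submodule R (Matrix n n R) where
  carrier := {A | ∀ i j, d i < d j + k → A i j = 0}
  add_mem' hA hB i j h := by simp [hA i j h, hB i j h]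
  zero_mem' _ _ _ := rfl
  smul_mem' c A hA i j h := by simp [hA i j h]

variable {d}

lemma degreeRaising_antitone : Antitone (degreeRaising (R := R) d) :=
  fun _ _ hab _ hA i j h => hA i j (by omega)

lemma one_mem_degreeRaising_zero [DecidableEq n] : (1 : Matrix n n R) ∈ degreeRaising d 0 :=
  fun i j h => one_apply_ne (by rintro rfl; omega)

lemma eq_zero_of_mem_degreeRaising {k : ℕ} (hk : ∀ i, d i < k) {A : Matrix n n R}
    (hA : A ∈ degreeRaising d k) : A = 0 :=
  ext fun i j => hA i j (by have := hk i; omega)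

variable [Fintype n]

lemma mul_mem_degreeRaising {a b : ℕ} {A B : Matrix n n R} (hA : A ∈ degreeRaising d a)
    (hB : B ∈ degreeRaising d b) : A * B ∈ degreeRaising d (a + b) := by
  intro i j h
  rw [mul_apply]
  refine Finset.sum_eq_zero fun l _ => ?_
  by_cases hl : d l < d j + b
  · rw [hB l j hl, mul_zero]
  · rw [hA i l (by omega), zero_mul]

lemma mul_mem_degreeRaising_of_le {a b c : ℕ} {A B : Matrix n n R} (hA : A ∈ degreeRaising d a)
    (hB : B ∈ degreeRaising d b) (hc : c ≤ a + b) : A * B ∈ degreeRaising d c :=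
  degreeRaising_antitone hc (mul_mem_degreeRaising hA hB)

variable [DecidableEq n]

lemma degreeRaising_mul_le (a b : ℕ) :
    degreeRaising (R := R) d a * degreeRaising d b ≤ degreeRaising d (a + b) :=
  Submodule.mul_le.2 fun _ hA _ hB => mul_mem_degreeRaising hA hB

lemma pow_degreeRaising_one_le (k : ℕ) :
    degreeRaising (R := R) d 1 ^ k ≤ degreeRaising d k := by
  induction k with
  | zero => exact Submodule.one_le.2 one_mem_degreeRaising_zero
  | succ k ih =>
    rw [pow_succ]
    exact (mul_le_mul' ih le_rfl).trans (degreeRaising_mul_le k 1)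

end Matrix

section QuarticDeriv

variable {A : Type*} [Ring A]

def quarticDeriv (S U : A) : A := S ^ 3 * U + S ^ 2 * U * S + S * U * S ^ 2 + U * S ^ 3

lemma add_pow_four_eq (S U : A) : (S + U) ^ 4 =
    S ^ 4 + quarticDeriv S U +
      (S ^ 2 * U ^ 2 + U ^ 2 * S ^ 2 + (S * U + U * S + U ^ 2) ^ 2) := by
  unfold quarticDeriv
  noncomm_ring

lemma quarticDeriv_add_right (S U V : A) :
    quarticDeriv S (U + V) = quarticDeriv S U + quarticDeriv S V := by
  unfold quarticDeriv
  noncomm_ring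

lemma quarticDeriv_smul_right {R : Type*} [CommRing R] [Algebra R A] (S U : A) (c : R) :
    quarticDeriv S (c • U) = c • quarticDeriv S U := by
  simp only [quarticDeriv, smul_add, mul_smul_comm, smul_mul_assoc]

lemma map_quarticDeriv {B : Type*} [Ring B] (f : A →+* B) (S U : A) :
    f (quarticDeriv S U) = quarticDeriv (f S) (f U) := by
  simp only [quarticDeriv, map_add, map_mul, map_pow]

end QuarticDeriv

namespace Matrix

variable {n R : Type*} [Fintype n] [DecidableEq n] [CommRing R] {d : n → ℕ}
  {S U : Matrix n n R}

lemma pow_mem_degreeRaising (hS : S ∈ degreeRaising d 1) (k : ℕ) : S ^ k ∈ degreeRaising d k :=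
  pow_degreeRaising_one_le k (Submodule.pow_mem_pow _ hS k)

lemma quarticDeriv_mem_degreeRaising {k : ℕ} (hS : S ∈ degreeRaising d 1)
    (hU : U ∈ degreeRaising d k) : quarticDeriv S U ∈ degreeRaising d (k + 3) := by
  have hpow := pow_mem_degreeRaising hS
  refine add_mem (add_mem (add_mem ?_ ?_) ?_) ?_
  · exact mul_mem_degreeRaising_of_le (hpow 3) hU (by omega)
  · exact mul_mem_degreeRaising_of_le (mul_mem_degreeRaising (hpow 2) hU) hS (by omega)
  · exact mul_mem_degreeRaising_of_le (mul_mem_degreeRaising hS hU) (hpow 2) (by omega)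
  · exact mul_mem_degreeRaising_of_le hU (hpow 3) (by omega)

lemma add_pow_four_sub_quarticDeriv_mem (hS : S ∈ degreeRaising d 1)
    (hU : U ∈ degreeRaising d 2) :
    (S + U) ^ 4 - S ^ 4 - quarticDeriv S U ∈ degreeRaising d 6 := by
  have hS2 := pow_mem_degreeRaising hS 2
  have hU2 : U ^ 2 ∈ degreeRaising d 4 := sq U ▸ mul_mem_degreeRaising hU hU
  have hV : S * U + U * S + U ^ 2 ∈ degreeRaising d 3 :=
    add_mem (add_mem (mul_mem_degreeRaising hS hU) (mul_mem_degreeRaising_of_le hU hS le_rfl))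
      (degreeRaising_antitone (by norm_num) hU2)
  rw [add_pow_four_eq, add_assoc, add_sub_cancel_left, add_sub_cancel_left]
  exact add_mem
    (add_mem (mul_mem_degreeRaising hS2 hU2) (mul_mem_degreeRaising_of_le hU2 hS2 le_rfl))
    (sq (S * U + U * S + U ^ 2) ▸ mul_mem_degreeRaising hV hV)

lemma quarticDeriv_eq_zero_of_add_pow_four_eq_zero (hd : ∀ i, d i < 6)
    (hS : S ∈ degreeRaising d 1) {M G : Matrix n n R} (hM : M ∈ degreeRaising d 2)
    (hG : G ∈ degreeRaising d 3) (hS4 : S ^ 4 = 0) (h : (S + (M + G)) ^ 4 = 0) :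
    quarticDeriv S M = 0 := by
  have hMG : M + G ∈ degreeRaising d 2 := add_mem hM (degreeRaising_antitone (by norm_num) hG)
  have hrest := eq_zero_of_mem_degreeRaising hd (add_pow_four_sub_quarticDeriv_mem hS hMG)
  rw [h, hS4, sub_self, zero_sub, neg_eq_zero, quarticDeriv_add_right,
    eq_zero_of_mem_degreeRaising hd (quarticDeriv_mem_degreeRaising hS hG), add_zero] at hrest
  exact hrest

end Matrix

namespace E7

open Matrix

/- `x` and `y` acting on the basis `1, y, xy, y², xy², yxy, xyxy, yxyxy` (where `yxy² = -xyxy`)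
of column vectors, so that entry `(7, 0)` is the coefficient of `yxyxy` in `r • 1`; `degree` is
word length. -/
def xInt : Matrix (Fin 8) (Fin 8) ℤ :=
  !![0,0,0,0,0,0,0,0; 0,0,0,0,0,0,0,0; 0,1,0,0,0,0,0,0; 0,0,0,0,0,0,0,0;
     0,0,0,1,0,0,0,0; 0,0,0,0,0,0,0,0; 0,0,0,0,0,1,0,0; 0,0,0,0,0,0,0,0]

def yInt : Matrix (Fin 8) (Fin 8) ℤ :=
  !![0,0,0,0,0,0,0,0; 1,0,0,0,0,0,0,0; 0,0,0,0,0,0,0,0; 0,1,0,0,0,0,0,0;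
     0,0,0,0,0,0,0,0; 0,0,1,0,0,0,0,0; 0,0,0,0,-1,0,0,0; 0,0,0,0,0,0,1,0]

def degree : Fin 8 → ℕ := ![0, 1, 2, 2, 3, 3, 4, 5]

lemma degree_lt_six (i : Fin 8) : degree i < 6 := by
  fin_cases i <;> decide

lemma xInt_mem : xInt ∈ degreeRaising degree 1 := by
  intro i j; fin_cases i <;> fin_cases j <;> decide

lemma yInt_mem : yInt ∈ degreeRaising degree 1 := by
  intro i j; fin_cases i <;> fin_cases j <;> decide

lemma xInt_mul_self : xInt * xInt = 0 := by decide

lemma yInt_mul_yInt_mul_self : yInt * (yInt * yInt) = 0 := by decide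

lemma xInt_add_yInt_pow_four : (xInt + yInt) ^ 4 = 0 := by decide

variable (K : Type*) [CommRing K]

def intCast : Matrix (Fin 8) (Fin 8) ℤ →+* Matrix (Fin 8) (Fin 8) K :=
  (Int.castRingHom K).mapMatrix

lemma intCast_apply (A : Matrix (Fin 8) (Fin 8) ℤ) (i j : Fin 8) :
    intCast K A i j = (A i j : K) := rfl

lemma intCast_mem_degreeRaising {A : Matrix (Fin 8) (Fin 8) ℤ} {k : ℕ}
    (hA : A ∈ degreeRaising degree k) : intCast K A ∈ degreeRaising degree k :=
  fun i j h => by rw [intCast_apply, hA i j h, Int.cast_zero]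

def rep : RE7 K →ₐ[K] Matrix (Fin 8) (Fin 8) K :=
  RingQuot.liftAlgHom K ⟨FreeAlgebra.lift K ![intCast K xInt, intCast K yInt], fun _ _ h => by
    cases h <;> simp only [map_mul, map_pow, map_add, map_zero, FreeAlgebra.lift_ι_apply,
      Matrix.cons_val_zero, Matrix.cons_val_one]
    · rw [← map_mul, xInt_mul_self, map_zero]
    · rw [← map_mul, ← map_mul, yInt_mul_yInt_mul_self, map_zero]
    · rw [← map_add, ← map_pow, xInt_add_yInt_pow_four, map_zero]⟩

lemma rep_mk (a : FreeAlgebra K (Fin 2)) :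
    rep K (RingQuot.mkRingHom (Rel7 K) a) =
      FreeAlgebra.lift K ![intCast K xInt, intCast K yInt] a := by
  rw [← RingQuot.mkAlgHom_coe K, RingHom.coe_coe, rep, RingQuot.liftAlgHom_mkAlgHom_apply]

lemma rep_x : rep K (e7x K) = intCast K xInt := by
  simp [e7x, rep_mk]

lemma rep_y : rep K (e7y K) = intCast K yInt := by
  simp [e7y, rep_mk]

lemma rep_mem_degreeRaising_zero (r : RE7 K) : rep K r ∈ degreeRaising degree 0 := by
  obtain ⟨a, rfl⟩ := RingQuot.mkRingHom_surjective (Rel7 K) r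
  rw [rep_mk]
  induction a using FreeAlgebra.induction with
  | grade0 c =>
    rw [AlgHom.commutes, Algebra.algebraMap_eq_smul_one]
    exact Submodule.smul_mem _ c one_mem_degreeRaising_zero
  | grade1 i =>
    rw [FreeAlgebra.lift_ι_apply]
    refine degreeRaising_antitone zero_le_one ?_
    fin_cases i
    exacts [intCast_mem_degreeRaising K xInt_mem, intCast_mem_degreeRaising K yInt_mem]
  | mul a b ha hb => rw [map_mul]; exact mul_mem_degreeRaising ha hb
  | add a b ha hb => rw [map_add]; exact add_mem ha hb

lemma map_rep_JE7_le : (JE7 K).map (rep K).toLinearMap ≤ degreeRaising degree 1 := by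
  have htop : (⊤ : Submodule K (RE7 K)).map (rep K).toLinearMap ≤ degreeRaising degree 0 := by
    rintro _ ⟨r, -, rfl⟩
    exact rep_mem_degreeRaising_zero K r
  have hspan : (Submodule.span K {e7x K, e7y K}).map (rep K).toLinearMap ≤
      degreeRaising degree 1 := by
    rw [Submodule.map_span, Submodule.span_le]
    rintro _ ⟨z, rfl | rfl, rfl⟩
    · exact (rep_x K).symm ▸ intCast_mem_degreeRaising K xInt_mem
    · exact (rep_y K).symm ▸ intCast_mem_degreeRaising K yInt_mem
  rw [JE7, Submodule.map_mul, Submodule.map_mul]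
  calc _ ≤ degreeRaising degree 0 * degreeRaising degree 1 * degreeRaising degree 0 :=
        mul_le_mul' (mul_le_mul' htop hspan) htop
    _ ≤ degreeRaising degree (0 + 1 + 0) :=
        (mul_le_mul' (degreeRaising_mul_le 0 1) le_rfl).trans (degreeRaising_mul_le _ 0)

lemma rep_mem_degreeRaising_of_mem_pow {k : ℕ} {r : RE7 K} (hr : r ∈ JE7 K ^ k) :
    rep K r ∈ degreeRaising degree k := by
  have h := Submodule.mem_map_of_mem (f := (rep K).toLinearMap) hr
  rw [Submodule.map_pow] at h
  exact pow_degreeRaising_one_le k (pow_le_pow_left' (map_rep_JE7_le K) k h)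

lemma quarticDeriv_apply_seven_zero (θ₁ θ₂ θ₃ : K) :
    quarticDeriv (intCast K xInt + intCast K yInt) (θ₁ • (intCast K xInt * intCast K yInt) +
      θ₂ • (intCast K yInt * intCast K xInt) + θ₃ • (intCast K yInt * intCast K yInt)) 7 0 =
      θ₁ + θ₂ - 2 * θ₃ := by
  have hxy : quarticDeriv (xInt + yInt) (xInt * yInt) 7 0 = 1 := by decide
  have hyx : quarticDeriv (xInt + yInt) (yInt * xInt) 7 0 = 1 := by decide
  have hyy : quarticDeriv (xInt + yInt) (yInt * yInt) 7 0 = -2 := by decide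
  simp only [quarticDeriv_add_right, quarticDeriv_smul_right, ← map_mul, ← map_add,
    ← map_quarticDeriv, Matrix.add_apply, Matrix.smul_apply, intCast_apply, hxy, hyx, hyy]
  push_cast
  ring

end E7

open Matrix E7 in
/-- Let `K` be a field and `R(E₇) = K⟨x,y⟩/(x², y³, (x+y)⁴)`, with `J` the two-sided ideal
generated by `x` and `y`. If `f = θ₁·xy + θ₂·yx + θ₃·y² + g` with `g ∈ J³` and
`(x + y + f)⁴ = 0`, then `θ₁ + θ₂ = 2θ₃`. -/
theorem e7_admissible_first_equation (K : Type*) [Field K]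
    (θ₁ θ₂ θ₃ : K) (f g : RE7 K) (hg : g ∈ (JE7 K) ^ 3)
    (hf : f = θ₁ • (e7x K * e7y K) + θ₂ • (e7y K * e7x K) + θ₃ • (e7y K * e7y K) + g)
    (hadm : (e7x K + e7y K + f) ^ 4 = 0) :
    θ₁ + θ₂ = 2 * θ₃ := by
  have hrep := congrArg (rep K) hadm
  rw [map_pow, map_zero, hf] at hrep
  simp only [map_add, map_smul, map_mul, rep_x, rep_y] at hrep
  set X := intCast K xInt
  set Y := intCast K yInt
  have hX : X ∈ degreeRaising degree 1 := intCast_mem_degreeRaising K xInt_mem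
  have hY : Y ∈ degreeRaising degree 1 := intCast_mem_degreeRaising K yInt_mem
  have hM : θ₁ • (X * Y) + θ₂ • (Y * X) + θ₃ • (Y * Y) ∈ degreeRaising degree 2 :=
    add_mem (add_mem (Submodule.smul_mem _ _ (mul_mem_degreeRaising hX hY))
      (Submodule.smul_mem _ _ (mul_mem_degreeRaising hY hX)))
      (Submodule.smul_mem _ _ (mul_mem_degreeRaising hY hY))
  have hS4 : (X + Y) ^ 4 = 0 := by rw [← map_add, ← map_pow, xInt_add_yInt_pow_four, map_zero]
  have hderiv := quarticDeriv_eq_zero_of_add_pow_four_eq_zero degree_lt_six (add_mem hX hY) hM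
    (rep_mem_degreeRaising_of_mem_pow K hg) hS4 hrep
  have h70 := quarticDeriv_apply_seven_zero K θ₁ θ₂ θ₃
  rw [hderiv, Matrix.zero_apply] at h70
  linear_combination -h70
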